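/- Let I = [0,1] and 1 ≤ p < ∞. For every measurable h : I → ℝ one has Var_{1,1/p}(h) ≤ Var_{p,1/p}(h) ≤ 2^{1/p} · Var_p(h). In particular, the inclusions UBV_p ⊆ BV_{p,1/p} ⊆ BV_{1,1/p} hold. -/

import Mathlib

open MeasureTheory Set Filter Metric
open scoped ENNReal

noncomputable section

/-- The unit interval `I = [0,1]`. -/
def II : Set ℝ := Set.Icc 0 1

/-- The universal `p`-variation
`Var_p(g) = sup ( Σ |g(x_i) − g(x_{i+1})|^p )^{1/p}` over finite monotone sequences in `I`. -/
def uVar (p : ℝ) (g : ℝ → ℝ) : ℝ≥0∞ :=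
  ⨆ (n : ℕ) (u : Fin (n + 1) → ℝ) (_ : Monotone u) (_ : ∀ i, u i ∈ II),
    ENNReal.ofReal ((∑ i : Fin n, |g (u i.castSucc) - g (u i.succ)| ^ p) ^ (1 / p))

/-- The essential oscillation of `h` over the `ε`-ball around `x`, intersected with `I`. -/
def osc (h : ℝ → ℝ) (ε x : ℝ) : ℝ≥0∞ :=
  essSup (fun q : ℝ × ℝ => ENNReal.ofReal |h q.1 - h q.2|)
    ((volume.restrict (Metric.ball x ε ∩ II)).prod (volume.restrict (Metric.ball x ε ∩ II)))

/-- `osc_p(h,ε) = ‖osc(h,ε,·)‖_{L^p(m)}`. -/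
def oscp (p : ℝ) (h : ℝ → ℝ) (ε : ℝ) : ℝ≥0∞ := (∫⁻ x in II, osc h ε x ^ p) ^ (1 / p)

/-- `Var_{p,r}(h) = sup_{0 < ε ≤ 1} ε^{−r} osc_p(h,ε)` (cutoff `A = 1`). -/
def Varpr (p r : ℝ) (h : ℝ → ℝ) : ℝ≥0∞ :=
  ⨆ ε ∈ Set.Ioc (0 : ℝ) 1, ENNReal.ofReal (ε ^ (-r)) * oscp p h ε

/-! Let `W b` be the `p`-th power of the variation of `h` over `I ∩ (-∞, b]`. It is monotone,
bounded by `Var_p(h)^p`, and any jump `|h z₁ - h z₂|` with `z₁ ≤ z₂` in `(x - ε, x + ε)` can be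
appended to a partition of `I ∩ (-∞, x - ε]`, so `osc(h,ε,x)^p ≤ W (x + ε) - W (x - ε)`.
Integrating over `I`, the two shifted integrals of `W` cancel except on an interval of length
`2ε`, which gives `osc_p(h,ε)^p ≤ 2ε Var_p(h)^p`. The comparison of `Var_{1,1/p}` with
`Var_{p,1/p}` is the monotonicity of `L^p` norms on the probability space `I`. -/

lemma monotone_snoc {α : Type*} [Preorder α] {n : ℕ} {u : Fin (n + 1) → α} (hu : Monotone u)
    {y : α} (hy : ∀ i, u i ≤ y) : Monotone (Fin.snoc u y : Fin (n + 2) → α) := by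
  rw [Fin.monotone_iff_le_succ, Fin.forall_fin_succ']
  simp only [Fin.succ_castSucc, Fin.snoc_castSucc, Fin.succ_last, Fin.snoc_last]
  exact ⟨fun i => hu (Fin.castSucc_le_succ i), hy _⟩

lemma forall_snoc_mem {α : Type*} {s : Set α} {n : ℕ} {u : Fin (n + 1) → α}
    (hu : ∀ i, u i ∈ s) {y : α} (hy : y ∈ s) : ∀ i, (Fin.snoc u y : Fin (n + 2) → α) i ∈ s :=
  Fin.forall_fin_succ'.2 ⟨by simpa only [Fin.snoc_castSucc] using hu, by simpa using hy⟩

lemma setLIntegral_Icc_comp_add_right (W : ℝ → ℝ≥0∞) (a b c : ℝ) :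
    ∫⁻ x in Icc a b, W (x + c) = ∫⁻ t in Icc (a + c) (b + c), W t := by
  have := (measurePreserving_add_right volume c).setLIntegral_comp_preimage_emb
    (measurableEmbedding_addRight c) W (Icc (a + c) (b + c))
  rwa [preimage_add_const_Icc, add_sub_cancel_right, add_sub_cancel_right] at this

lemma lintegral_Icc_sub_shift_le {W : ℝ → ℝ≥0∞} (hW : Monotone W) {T : ℝ≥0∞}
    (hWT : ∀ t, W t ≤ T) (hT : T ≠ ⊤) (a b : ℝ) {ε : ℝ} (hε : 0 ≤ ε) :
    ∫⁻ x in Icc a b, (W (x + ε) - W (x - ε)) ≤ ENNReal.ofReal (2 * ε) * T := by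
  have hfin : ∫⁻ x in Icc a b, W (x - ε) ≠ ⊤ := by
    refine ne_top_of_le_ne_top ?_ (setLIntegral_mono' measurableSet_Icc fun x _ => hWT (x - ε))
    rw [setLIntegral_const, Real.volume_Icc]
    exact ENNReal.mul_ne_top hT ENNReal.ofReal_ne_top
  rw [lintegral_sub (f := fun x => W (x + ε)) (g := fun x => W (x - ε))
      (hW.measurable.comp (measurable_sub_const ε)) hfin
      (ae_of_all _ fun x => hW (by linarith)),
    setLIntegral_Icc_comp_add_right, tsub_le_iff_right]
  simp only [sub_eq_add_neg]
  rw [setLIntegral_Icc_comp_add_right]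
  have hcover : Icc (a + ε) (b + ε) ⊆ Icc (a + -ε) (b + -ε) ∪ Ioc (b + -ε) (b + ε) := by
    intro t ht
    rcases le_or_gt t (b + -ε) with htb | htb
    · exact Or.inl ⟨by linarith [ht.1], htb⟩
    · exact Or.inr ⟨htb, ht.2⟩
  calc ∫⁻ t in Icc (a + ε) (b + ε), W t
      ≤ ∫⁻ t in Icc (a + -ε) (b + -ε) ∪ Ioc (b + -ε) (b + ε), W t :=
        lintegral_mono_set hcover
    _ ≤ (∫⁻ t in Icc (a + -ε) (b + -ε), W t) + ∫⁻ t in Ioc (b + -ε) (b + ε), W t :=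
        lintegral_union_le _ _ _
    _ ≤ (∫⁻ t in Icc (a + -ε) (b + -ε), W t) + ∫⁻ _ in Ioc (b + -ε) (b + ε), T := by
        gcongr with t; exact hWT t
    _ = ENNReal.ofReal (2 * ε) * T + ∫⁻ t in Icc (a + -ε) (b + -ε), W t := by
        rw [setLIntegral_const, Real.volume_Ioc, add_comm, mul_comm]
        ring_nf

lemma lintegral_le_lintegral_rpow_rpow_one_div {α : Type*} [MeasurableSpace α] {μ : Measure α}
    [IsProbabilityMeasure μ] {p : ℝ} (hp : 1 ≤ p) (f : α → ℝ≥0∞) :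
    ∫⁻ a, f a ∂μ ≤ (∫⁻ a, f a ^ p ∂μ) ^ (1 / p) := by
  -- `f` need not be measurable, so compare through a measurable minorant with the same integral.
  obtain ⟨g, hgm, hgf, hg⟩ := exists_measurable_le_lintegral_eq μ f
  have hLp := eLpNorm'_le_eLpNorm'_of_exponent_le one_pos hp μ hgm.aestronglyMeasurable
  simp only [eLpNorm', enorm_eq_self, ENNReal.rpow_one, div_one] at hLp
  rw [hg]
  exact hLp.trans (by gcongr with a; exact hgf a)

section PVariation

variable (p : ℝ) (h : ℝ → ℝ)

def pVarSum {n : ℕ} (u : Fin (n + 1) → ℝ) : ℝ :=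
  ∑ i : Fin n, |h (u i.castSucc) - h (u i.succ)| ^ p

def pVarPow (s : Set ℝ) : ℝ≥0∞ :=
  ⨆ (n : ℕ) (u : Fin (n + 1) → ℝ) (_ : Monotone u) (_ : ∀ i, u i ∈ s),
    ENNReal.ofReal (pVarSum p h u)

variable {p h}

lemma pVarSum_nonneg {n : ℕ} (u : Fin (n + 1) → ℝ) : 0 ≤ pVarSum p h u :=
  Finset.sum_nonneg fun _ _ => Real.rpow_nonneg (abs_nonneg _) p

lemma pVarSum_snoc {n : ℕ} (u : Fin (n + 1) → ℝ) (y : ℝ) :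
    pVarSum p h (Fin.snoc u y : Fin (n + 2) → ℝ)
      = pVarSum p h u + |h (u (Fin.last n)) - h y| ^ p := by
  simp only [pVarSum, Fin.sum_univ_castSucc, Fin.succ_castSucc, Fin.snoc_castSucc,
    Fin.succ_last, Fin.snoc_last]

lemma ofReal_pVarSum_le_pVarPow {s : Set ℝ} {n : ℕ} {u : Fin (n + 1) → ℝ} (hu : Monotone u)
    (hs : ∀ i, u i ∈ s) : ENNReal.ofReal (pVarSum p h u) ≤ pVarPow p h s :=
  le_iSup_of_le n <| le_iSup_of_le u <| le_iSup_of_le hu <| le_iSup_of_le hs le_rfl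

lemma pVarPow_mono : Monotone (pVarPow p h) := fun _ _ hst =>
  iSup_le fun _ => iSup_le fun _ => iSup_le fun hu => iSup_le fun hs =>
    ofReal_pVarSum_le_pVarPow hu fun i => hst (hs i)

lemma pVarPow_le_uVar_rpow (hp : 0 < p) {s : Set ℝ} (hs : s ⊆ II) :
    pVarPow p h s ≤ uVar p h ^ p :=
  iSup_le fun n => iSup_le fun u => iSup_le fun hu => iSup_le fun hsu => calc
    ENNReal.ofReal (pVarSum p h u) = ENNReal.ofReal (pVarSum p h u ^ (1 / p)) ^ p := by
      rw [ENNReal.ofReal_rpow_of_nonneg (Real.rpow_nonneg (pVarSum_nonneg u) _) hp.le,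
        ← Real.rpow_mul (pVarSum_nonneg u), one_div_mul_cancel hp.ne', Real.rpow_one]
    _ ≤ uVar p h ^ p := ENNReal.rpow_le_rpow
      (le_iSup_of_le n <| le_iSup_of_le u <| le_iSup_of_le hu <|
        le_iSup_of_le (fun i => hs (hsu i)) le_rfl) hp.le

lemma pVarPow_add_le {s t : Set ℝ} {y₁ y₂ : ℝ} (hsy : ∀ x ∈ s, x ≤ y₁) (hst : s ⊆ t)
    (hy₁ : y₁ ∈ t) (hy₂ : y₂ ∈ t) (h12 : y₁ ≤ y₂) :
    pVarPow p h s + ENNReal.ofReal (|h y₁ - h y₂| ^ p) ≤ pVarPow p h t := by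
  have hpair : ENNReal.ofReal (|h y₁ - h y₂| ^ p) ≤ pVarPow p h t := by
    have hmono : Monotone ![y₁, y₂] := by
      simpa [Fin.monotone_iff_le_succ] using h12
    simpa [pVarSum] using ofReal_pVarSum_le_pVarPow (h := h) (p := p) hmono
      (by simpa [Fin.forall_fin_two] using ⟨hy₁, hy₂⟩)
  -- `hpair` lets the constant pass through the supremum, whose family may be empty.
  rw [← tsub_add_cancel_of_le hpair]
  gcongr
  refine iSup_le fun n => iSup_le fun u => iSup_le fun hu => iSup_le fun hs => ?_
  refine ENNReal.le_sub_of_add_le_right ENNReal.ofReal_ne_top ?_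
  have huy : ∀ i, u i ≤ y₁ := fun i => hsy _ (hs i)
  calc ENNReal.ofReal (pVarSum p h u) + ENNReal.ofReal (|h y₁ - h y₂| ^ p)
      ≤ ENNReal.ofReal (pVarSum p h (Fin.snoc (Fin.snoc u y₁ : Fin (n + 2) → ℝ) y₂)) := by
        rw [← ENNReal.ofReal_add (pVarSum_nonneg u) (Real.rpow_nonneg (abs_nonneg _) p),
          pVarSum_snoc, pVarSum_snoc, Fin.snoc_last]
        gcongr
        exact le_add_of_nonneg_right (Real.rpow_nonneg (abs_nonneg _) p)
    _ ≤ pVarPow p h t := ofReal_pVarSum_le_pVarPow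
        (monotone_snoc (monotone_snoc hu huy)
          (forall_snoc_mem (s := Iic y₂) (fun i => (huy i).trans h12) h12))
        (forall_snoc_mem (forall_snoc_mem (fun i => hst (hs i)) hy₁) hy₂)

end PVariation

lemma osc_le_of_forall_le {h : ℝ → ℝ} {ε x : ℝ} {C : ℝ≥0∞}
    (hC : ∀ z₁ ∈ ball x ε ∩ II, ∀ z₂ ∈ ball x ε ∩ II, z₁ ≤ z₂ →
      ENNReal.ofReal |h z₁ - h z₂| ≤ C) :
    osc h ε x ≤ C := by
  have hmeas : MeasurableSet (ball x ε ∩ II) := measurableSet_ball.inter measurableSet_Icc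
  rw [osc, Measure.prod_restrict]
  refine essSup_le_of_ae_le _ ((ae_restrict_iff' (hmeas.prod hmeas)).2 (ae_of_all _ ?_))
  rintro ⟨z₁, z₂⟩ ⟨hz₁, hz₂⟩
  rcases le_total z₁ z₂ with h12 | h21
  · exact hC z₁ hz₁ z₂ hz₂ h12
  · simpa only [abs_sub_comm] using hC z₂ hz₂ z₁ hz₁ h21

lemma osc_rpow_le_pVarPow_sub {p : ℝ} (hp : 0 < p) {h : ℝ → ℝ} {ε x : ℝ}
    (hfin : pVarPow p h (II ∩ Iic (x - ε)) ≠ ⊤) :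
    osc h ε x ^ p ≤ pVarPow p h (II ∩ Iic (x + ε)) - pVarPow p h (II ∩ Iic (x - ε)) := by
  rw [← ENNReal.le_rpow_inv_iff hp]
  refine osc_le_of_forall_le fun z₁ hz₁ z₂ hz₂ h12 => ?_
  rw [ENNReal.le_rpow_inv_iff hp, ENNReal.ofReal_rpow_of_nonneg (abs_nonneg _) hp.le]
  obtain ⟨hz₁l, hz₁r⟩ := abs_sub_lt_iff.1 (mem_ball.1 hz₁.1)
  obtain ⟨hz₂l, hz₂r⟩ := abs_sub_lt_iff.1 (mem_ball.1 hz₂.1)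
  refine ENNReal.le_sub_of_add_le_left hfin (pVarPow_add_le ?_ ?_ ?_ ?_ h12)
  · exact fun y hy => by linarith [mem_Iic.1 hy.2]
  · exact inter_subset_inter_right _ (Iic_subset_Iic.2 (by linarith : x - ε ≤ x + ε))
  · exact ⟨hz₁.2, mem_Iic.2 (by linarith)⟩
  · exact ⟨hz₂.2, mem_Iic.2 (by linarith)⟩

lemma oscp_le_uVar {p : ℝ} (hp : 0 < p) (h : ℝ → ℝ) {ε : ℝ} (hε : 0 < ε) :
    oscp p h ε ≤ ENNReal.ofReal ((2 * ε) ^ (1 / p)) * uVar p h := by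
  have hcoef : ENNReal.ofReal ((2 * ε) ^ (1 / p)) ≠ 0 := by positivity
  rcases eq_or_ne (uVar p h) ⊤ with htop | hfin
  · rw [htop, ENNReal.mul_top hcoef]
    exact le_top
  set W : ℝ → ℝ≥0∞ := fun b => pVarPow p h (II ∩ Iic b)
  have hWT : ∀ b, W b ≤ uVar p h ^ p := fun b => pVarPow_le_uVar_rpow hp inter_subset_left
  have hT : uVar p h ^ p ≠ ⊤ := ENNReal.rpow_ne_top_of_nonneg hp.le hfin
  have hW : Monotone W := fun a b hab =>
    pVarPow_mono (inter_subset_inter_right _ (Iic_subset_Iic.2 hab))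
  calc oscp p h ε
      ≤ (∫⁻ x in II, (W (x + ε) - W (x - ε))) ^ (1 / p) := by
        refine ENNReal.rpow_le_rpow (lintegral_mono fun x => ?_) (by positivity)
        exact osc_rpow_le_pVarPow_sub hp (ne_top_of_le_ne_top hT (hWT _))
    _ ≤ (ENNReal.ofReal (2 * ε) * uVar p h ^ p) ^ (1 / p) :=
        ENNReal.rpow_le_rpow (lintegral_Icc_sub_shift_le hW hWT hT 0 1 hε.le) (by positivity)
    _ = ENNReal.ofReal ((2 * ε) ^ (1 / p)) * uVar p h := by
        rw [ENNReal.mul_rpow_of_nonneg _ _ (by positivity),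
          ENNReal.ofReal_rpow_of_nonneg (by positivity) (by positivity),
          ← ENNReal.rpow_mul, mul_one_div_cancel hp.ne', ENNReal.rpow_one]

lemma varpr_le_two_rpow_mul_uVar {p : ℝ} (hp : 0 < p) (h : ℝ → ℝ) :
    Varpr p (1 / p) h ≤ ENNReal.ofReal ((2 : ℝ) ^ (1 / p)) * uVar p h := by
  refine iSup₂_le fun ε hε => ?_
  calc ENNReal.ofReal (ε ^ (-(1 / p))) * oscp p h ε
      ≤ ENNReal.ofReal (ε ^ (-(1 / p))) * (ENNReal.ofReal ((2 * ε) ^ (1 / p)) * uVar p h) := by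
        gcongr; exact oscp_le_uVar hp h hε.1
    _ = ENNReal.ofReal ((2 : ℝ) ^ (1 / p)) * uVar p h := by
        rw [← mul_assoc, ← ENNReal.ofReal_mul (Real.rpow_nonneg hε.1.le _),
          Real.mul_rpow zero_le_two hε.1.le, mul_left_comm, ← Real.rpow_add hε.1,
          neg_add_cancel, Real.rpow_zero, mul_one]

instance : IsProbabilityMeasure (volume.restrict II) :=
  ⟨by rw [Measure.restrict_apply_univ, II, Real.volume_Icc, sub_zero, ENNReal.ofReal_one]⟩

lemma varpr_one_le_varpr {p : ℝ} (hp : 1 ≤ p) (r : ℝ) (h : ℝ → ℝ) :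
    Varpr 1 r h ≤ Varpr p r h := by
  refine iSup₂_mono fun ε _ => mul_le_mul_right ?_ _
  simpa only [oscp, div_one, ENNReal.rpow_one] using
    lintegral_le_lintegral_rpow_rpow_one_div hp (osc h ε)

theorem var_one_le_var_p_le_uvar_general
    (p : ℝ) (hp : 1 ≤ p) (h : ℝ → ℝ) :
    Varpr 1 (1 / p) h ≤ Varpr p (1 / p) h ∧
      Varpr p (1 / p) h ≤ ENNReal.ofReal ((2 : ℝ) ^ (1 / p)) * uVar p h ∧
      (uVar p h < ⊤ → Varpr p (1 / p) h < ⊤) ∧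
      (Varpr p (1 / p) h < ⊤ → Varpr 1 (1 / p) h < ⊤) := by
  have h₁ := varpr_one_le_varpr hp (1 / p) h
  have h₂ := varpr_le_two_rpow_mul_uVar (zero_lt_one.trans_le hp) h
  exact ⟨h₁, h₂, fun hfin => h₂.trans_lt (ENNReal.mul_lt_top ENNReal.ofReal_lt_top hfin),
    h₁.trans_lt⟩

/-- For `1 ≤ p < ∞` and any measurable `h : I → ℝ`,
`Var_{1,1/p}(h) ≤ Var_{p,1/p}(h) ≤ 2^{1/p} Var_p(h)`; in particular
`UBV_p ⊆ BV_{p,1/p} ⊆ BV_{1,1/p}`. -/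
theorem var_one_le_var_p_le_uvar
    (p : ℝ) (hp : 1 ≤ p) (h : ℝ → ℝ) (hm : Measurable h) :
    Varpr 1 (1 / p) h ≤ Varpr p (1 / p) h ∧
      Varpr p (1 / p) h ≤ ENNReal.ofReal ((2 : ℝ) ^ (1 / p)) * uVar p h ∧
      (uVar p h < ⊤ → Varpr p (1 / p) h < ⊤) ∧
      (Varpr p (1 / p) h < ⊤ → Varpr 1 (1 / p) h < ⊤) :=
  var_one_le_var_p_le_uvar_general p hp h
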